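/- arXiv:1711.03190 — 9 statements merged into one kernel-verified Lean document; each statement's English description precedes it below -/
import Mathlib

section
/- The EYE penalty eye(θ) = ‖(1−r)⊙θ‖₁ + √(‖(1−r)⊙θ‖₁² + ‖r⊙θ‖₂²), where r ∈ {0,1}^d is a fixed indicator vector and ⊙ denotes elementwise product, is a norm on ℝ^d. -/
/-!
Write `p θ = ‖(1 - r) ⊙ θ‖₁` and `q θ = ‖r ⊙ θ‖₂`; both are seminorms when `r ≤ 1`. Then
`eye = p + √(p² + q²)`, and `√(p² + q²)` is again a seminorm: subadditivity of `p` and `q`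
followed by the triangle inequality in the Euclidean plane. A sum of seminorms is a seminorm, and
it is definite because every coordinate of `θ` is seen by `p` unless `rᵢ = 1`, and then by `q`.
-/

noncomputable def eye {d : ℕ} (r θ : Fin d → ℝ) : ℝ :=
  (∑ i, (1 - r i) * |θ i|) +
    Real.sqrt ((∑ i, (1 - r i) * |θ i|) ^ 2 + ∑ i, (r i * θ i) ^ 2)

open Complex in
theorem Real.sqrt_sq_add_sq_add_le (a b c d : ℝ) :
    √((a + c) ^ 2 + (b + d) ^ 2) ≤ √(a ^ 2 + b ^ 2) + √(c ^ 2 + d ^ 2) := by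
  simpa only [← norm_add_mul_I, ofReal_add, add_mul, add_add_add_comm] using
    norm_add_le (a + b * I : ℂ) (c + d * I)

namespace Seminorm

variable {𝕜 E : Type*} [SeminormedRing 𝕜] [AddCommGroup E] [Module 𝕜 E]

noncomputable def hypot (p q : Seminorm 𝕜 E) : Seminorm 𝕜 E :=
  Seminorm.of (fun x => √(p x ^ 2 + q x ^ 2))
    (fun x y => calc
      √(p (x + y) ^ 2 + q (x + y) ^ 2) ≤ √((p x + p y) ^ 2 + (q x + q y) ^ 2) := by
        gcongr <;> first | exact apply_nonneg _ _ | exact map_add_le_add _ _ _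
      _ ≤ √(p x ^ 2 + q x ^ 2) + √(p y ^ 2 + q y ^ 2) := Real.sqrt_sq_add_sq_add_le ..)
    (fun a x => by
      rw [map_smul_eq_mul, map_smul_eq_mul, mul_pow, mul_pow, ← mul_add,
        Real.sqrt_mul (sq_nonneg _), Real.sqrt_sq (norm_nonneg a)])

theorem hypot_apply (p q : Seminorm 𝕜 E) (x : E) : p.hypot q x = √(p x ^ 2 + q x ^ 2) := rfl

theorem eq_zero_and_eq_zero_of_add_hypot_eq_zero {p q : Seminorm 𝕜 E} {x : E}
    (h : (p + p.hypot q) x = 0) : p x = 0 ∧ q x = 0 := by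
  rw [add_apply, hypot_apply] at h
  have hp : p x = 0 := by linarith [apply_nonneg p x, Real.sqrt_nonneg (p x ^ 2 + q x ^ 2)]
  rw [hp, zero_add, zero_pow two_ne_zero, zero_add, Real.sqrt_sq_eq_abs, abs_eq_zero] at h
  exact ⟨hp, h⟩

end Seminorm

section Coordinatewise

variable {ι : Type*} [Fintype ι]

noncomputable def weightedL1Seminorm (w : ι → ℝ) (hw : ∀ i, 0 ≤ w i) : Seminorm ℝ (ι → ℝ) :=
  Seminorm.of (fun θ => ∑ i, w i * |θ i|)
    (fun θ φ => by
      rw [← Finset.sum_add_distrib]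
      gcongr with i
      exact mul_le_mul_of_nonneg_left (abs_add_le _ _) (hw i) |>.trans_eq (mul_add ..))
    (fun t θ => by
      simp only [Finset.mul_sum, Pi.smul_apply, smul_eq_mul, abs_mul, Real.norm_eq_abs]
      exact Finset.sum_congr rfl fun i _ => by ring)

theorem weightedL1Seminorm_apply (w : ι → ℝ) (hw : ∀ i, 0 ≤ w i) (θ : ι → ℝ) :
    weightedL1Seminorm w hw θ = ∑ i, w i * |θ i| := rfl

theorem mul_abs_eq_zero_of_weightedL1Seminorm_eq_zero {w : ι → ℝ} {hw : ∀ i, 0 ≤ w i}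
    {θ : ι → ℝ} (h : weightedL1Seminorm w hw θ = 0) (i : ι) : w i * |θ i| = 0 :=
  (Finset.sum_eq_zero_iff_of_nonneg fun j _ => mul_nonneg (hw j) (abs_nonneg _)).1 h i
    (Finset.mem_univ i)

noncomputable def maskedL2Seminorm (r : ι → ℝ) : Seminorm ℝ (ι → ℝ) :=
  (normSeminorm ℝ (EuclideanSpace ℝ ι)).comp
    ((WithLp.linearEquiv 2 ℝ (ι → ℝ)).symm.toLinearMap ∘ₗ LinearMap.mulLeft ℝ r)

theorem maskedL2Seminorm_sq (r θ : ι → ℝ) :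
    maskedL2Seminorm r θ ^ 2 = ∑ i, (r i * θ i) ^ 2 := by
  rw [maskedL2Seminorm, Seminorm.comp_apply, coe_normSeminorm, EuclideanSpace.norm_eq,
    Real.sq_sqrt (by positivity)]
  simp [← abs_mul, sq_abs]

theorem mul_eq_zero_of_maskedL2Seminorm_eq_zero {r θ : ι → ℝ} (h : maskedL2Seminorm r θ = 0)
    (i : ι) : r i * θ i = 0 := by
  rw [maskedL2Seminorm, Seminorm.comp_apply, coe_normSeminorm, norm_eq_zero] at h
  simpa using congrArg (· i) h

end Coordinatewise

noncomputable def eyeSeminorm {ι : Type*} [Fintype ι] (r : ι → ℝ) (hr : ∀ i, r i ≤ 1) :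
    Seminorm ℝ (ι → ℝ) :=
  weightedL1Seminorm (1 - r) (fun i => sub_nonneg.2 (hr i)) +
    (weightedL1Seminorm (1 - r) (fun i => sub_nonneg.2 (hr i))).hypot (maskedL2Seminorm r)

theorem eye_eq_eyeSeminorm {d : ℕ} {r : Fin d → ℝ} (hr : ∀ i, r i ≤ 1) (θ : Fin d → ℝ) :
    eye r θ = eyeSeminorm r hr θ := by
  rw [eyeSeminorm, add_apply, Seminorm.hypot_apply, maskedL2Seminorm_sq]
  rfl

theorem eyeSeminorm_eq_zero_iff {ι : Type*} [Fintype ι] {r : ι → ℝ} (hr : ∀ i, r i ≤ 1)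
    {θ : ι → ℝ} :
    eyeSeminorm r hr θ = 0 ↔ θ = 0 := by
  refine ⟨fun h => ?_, fun h => h ▸ map_zero _⟩
  obtain ⟨hl1, hl2⟩ := Seminorm.eq_zero_and_eq_zero_of_add_hypot_eq_zero h
  funext i
  rcases mul_eq_zero.1 (mul_abs_eq_zero_of_weightedL1Seminorm_eq_zero hl1 i) with h1 | h1
  · simpa [(sub_eq_zero.1 h1).symm] using mul_eq_zero_of_maskedL2Seminorm_eq_zero hl2 i
  · exact abs_eq_zero.1 h1

theorem eye_is_norm {d : ℕ} (r : Fin d → ℝ) (hr : ∀ i, r i = 0 ∨ r i = 1) :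
    (∀ θ : Fin d → ℝ, 0 ≤ eye r θ) ∧
    (∀ θ : Fin d → ℝ, eye r θ = 0 ↔ θ = 0) ∧
    (∀ (t : ℝ) (θ : Fin d → ℝ), eye r (t • θ) = |t| * eye r θ) ∧
    (∀ θ φ : Fin d → ℝ, eye r (θ + φ) ≤ eye r θ + eye r φ) := by
  have hr1 : ∀ i, r i ≤ 1 := fun i => by rcases hr i with h | h <;> simp [h]
  simp only [eye_eq_eyeSeminorm hr1]
  exact ⟨apply_nonneg _, fun θ => eyeSeminorm_eq_zero_iff hr1,
    fun t θ => by rw [map_smul_eq_mul, Real.norm_eq_abs], map_add_le_add _⟩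
end

section
/- For x ∈ ℝ^d with x ≠ 0, the unique t > 0 satisfying 2‖(1−r)⊙x‖₁/t + ‖r⊙x‖₂²/t² = 1 is t = ‖(1−r)⊙x‖₁ + √(‖(1−r)⊙x‖₁² + ‖r⊙x‖₂²), provided ‖(1−r)⊙x‖₁ and ‖r⊙x‖₂ are not both zero. -/
lemma two_mul_div_add_div_sq_eq_one_iff {A B t : ℝ} (ht : t ≠ 0) :
    2 * A / t + B / t ^ 2 = 1 ↔ t ^ 2 = 2 * A * t + B := by
  rw [div_add_div _ _ ht (pow_ne_zero 2 ht), div_eq_one_iff_eq (mul_ne_zero ht (pow_ne_zero 2 ht))]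
  constructor <;> intro h
  · apply mul_left_cancel₀ ht
    linear_combination -h
  · linear_combination -t * h

lemma sq_eq_two_mul_mul_add_iff_of_pos {A B t : ℝ} (hB : 0 ≤ B) (ht : 0 < t) :
    t ^ 2 = 2 * A * t + B ↔ t = A + Real.sqrt (A ^ 2 + B) := by
  set s := Real.sqrt (A ^ 2 + B)
  have hs : s ^ 2 = A ^ 2 + B := Real.sq_sqrt (by positivity)
  have hAs : A ≤ s := (le_abs_self A).trans (Real.abs_le_sqrt (le_add_of_nonneg_right hB))
  constructor
  · intro h
    have hfactor : (t - (A + s)) * (t - A + s) = 0 := by linear_combination h - hs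
    have hsmall : t - A + s ≠ 0 := by linarith
    linarith [(mul_eq_zero.mp hfactor).resolve_right hsmall]
  · rintro rfl
    linear_combination hs

theorem eye_gauge_unique_general {d : ℕ} (r x : Fin d → ℝ)
    (A : ℝ)
    (B2 : ℝ) (hB2 : B2 = ∑ i, (r i * x i) ^ 2) :
    ∀ t : ℝ, 0 < t →
      (2 * A / t + B2 / t ^ 2 = 1 ↔ t = A + Real.sqrt (A ^ 2 + B2)) := by
  intro t ht
  have hB2_nonneg : 0 ≤ B2 := hB2 ▸ by positivity
  rw [two_mul_div_add_div_sq_eq_one_iff ht.ne']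
  exact sq_eq_two_mul_mul_add_iff_of_pos hB2_nonneg ht

theorem eye_gauge_unique {d : ℕ} (r x : Fin d → ℝ) (hr : ∀ i, r i = 0 ∨ r i = 1)
    (hx : x ≠ 0)
    (A : ℝ) (hA : A = ∑ i, (1 - r i) * |x i|)
    (B2 : ℝ) (hB2 : B2 = ∑ i, (r i * x i) ^ 2)
    (hAB : ¬ (A = 0 ∧ B2 = 0)) :
    ∀ t : ℝ, 0 < t →
      (2 * A / t + B2 / t ^ 2 = 1 ↔ t = A + Real.sqrt (A ^ 2 + B2)) :=
  eye_gauge_unique_general r x A B2 hB2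
end

section
/- For real numbers a, b, c, d with c ≥ 0, d ≥ 0: a² + 2ab ≤ 2|a|·√(c² + d + (a+b)²) + 2c|a| (where d ≥ 0). Consequently √((c+|a|)² + d + b²) ≥ √(c² + d + (a+b)²) − |a|. -/
/-! Since `a² + 2ab = 2a(a + b) - a²`, the left side of the first inequality is at most
`2|a|·|a + b| ≤ 2|a|·√(c² + d + (a + b)²)`. The second inequality is the first one in disguise:
squaring `√(c² + d + (a + b)²) - |a|` and comparing with `(c + |a|)² + d + b²` leaves exactly
`a² + 2ab ≤ 2|a|·√(c² + d + (a + b)²) + 2c|a|`. -/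

theorem sq_add_two_mul_le_two_abs_mul_abs_add (a b : ℝ) :
    a ^ 2 + 2 * a * b ≤ 2 * |a| * |a + b| := by
  have h : a * (a + b) ≤ |a| * |a + b| := (le_abs_self _).trans (abs_mul a (a + b)).le
  linear_combination 2 * h + sq_nonneg a

theorem eye_key_inequality (a b c d : ℝ) (hc : 0 ≤ c) (hd : 0 ≤ d) :
    a ^ 2 + 2 * a * b ≤ 2 * |a| * Real.sqrt (c ^ 2 + d + (a + b) ^ 2) + 2 * c * |a| ∧
    Real.sqrt (c ^ 2 + d + (a + b) ^ 2) - |a| ≤ Real.sqrt ((c + |a|) ^ 2 + d + b ^ 2) := by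
  have hS : 0 ≤ c ^ 2 + d + (a + b) ^ 2 := by positivity
  have key : a ^ 2 + 2 * a * b ≤
      2 * |a| * Real.sqrt (c ^ 2 + d + (a + b) ^ 2) + 2 * c * |a| :=
    calc a ^ 2 + 2 * a * b ≤ 2 * |a| * |a + b| := sq_add_two_mul_le_two_abs_mul_abs_add a b
      _ ≤ 2 * |a| * Real.sqrt (c ^ 2 + d + (a + b) ^ 2) := by
        gcongr
        exact Real.abs_le_sqrt (le_add_of_nonneg_left (by positivity))
      _ ≤ _ := le_add_of_nonneg_right (by positivity)
  refine ⟨key, (le_abs_self _).trans (Real.abs_le_sqrt ?_)⟩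
  linear_combination key + Real.sq_sqrt hS
end

section
/- Let C, D ≥ 0 and θᵢ ≠ θⱼ be reals. Then √((C + |θᵢ| + |θⱼ|)² + D + θᵢ² + θⱼ²) > √((C + |θᵢ + θⱼ|)² + D + |θᵢ + θⱼ|²/2). Consequently, replacing (θᵢ, θⱼ) by ((θᵢ+θⱼ)/2, (θᵢ+θⱼ)/2) strictly decreases the EYE penalty when both coordinates are known (r-indices equal 1). -/
/-!
Averaging two coordinates can only shrink the ℓ¹ part, by the triangle inequality
`|θᵢ + θⱼ| ≤ |θᵢ| + |θⱼ|`, and strictly shrinks the ℓ² part, since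
`θᵢ² + θⱼ² - (θᵢ + θⱼ)² / 2 = (θᵢ - θⱼ)² / 2 > 0`.
-/

lemma sq_add_abs_add_le {C : ℝ} (hC : 0 ≤ C) (a b : ℝ) :
    (C + |a + b|) ^ 2 ≤ (C + |a| + |b|) ^ 2 := by
  have hab : C + |a + b| ≤ C + |a| + |b| := by linarith [abs_add_le a b]
  exact pow_le_pow_left₀ (by positivity) hab 2

lemma add_sq_div_two_lt_sq_add_sq {a b : ℝ} (hne : a ≠ b) :
    (a + b) ^ 2 / 2 < a ^ 2 + b ^ 2 := by
  have hgap : a ^ 2 + b ^ 2 - (a + b) ^ 2 / 2 = (a - b) ^ 2 / 2 := by ring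
  have hpos : 0 < (a - b) ^ 2 / 2 := by
    have : a - b ≠ 0 := sub_ne_zero.mpr hne
    positivity
  linarith

theorem eye_averaging_strict (C D θi θj : ℝ) (hC : 0 ≤ C) (hD : 0 ≤ D)
    (hne : θi ≠ θj) :
    Real.sqrt ((C + |θi + θj|) ^ 2 + D + |θi + θj| ^ 2 / 2) <
      Real.sqrt ((C + |θi| + |θj|) ^ 2 + D + θi ^ 2 + θj ^ 2) := by
  apply Real.sqrt_lt_sqrt (by positivity)
  rw [sq_abs]
  linarith [sq_add_abs_add_le hC θi θj, add_sq_div_two_lt_sq_add_sq hne]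
end

section
/- Let C, D ≥ 0 and θᵢ, θⱼ real with θⱼ ≠ 0. Then |θⱼ| + √((C + |θⱼ|)² + D + θᵢ²) > √(C² + D + (θᵢ + θⱼ)²). Consequently, in the perfectly correlated setting with i a known feature (rᵢ=1) and j unknown (rⱼ=0), transferring all of θⱼ onto θᵢ strictly decreases the EYE penalty. -/
/-! The ℓ² term is 1-Lipschitz in each coordinate, so moving θⱼ into the i-th coordinate raises it
by at most |θⱼ|, which is exactly the ℓ¹ cost saved; strictness comes from the ℓ¹ mass |θⱼ| that
the original vector still carries inside its ℓ² term. -/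

theorem Real.sqrt_add_sq_add_le {s : ℝ} (hs : 0 ≤ s) (x y : ℝ) :
    √(s + (x + y) ^ 2) ≤ √(s + x ^ 2) + |y| := by
  have hsx : 0 ≤ s + x ^ 2 := by positivity
  have hx : |x| ≤ √(s + x ^ 2) := Real.abs_le_sqrt (by linarith)
  have hxy : x * y ≤ √(s + x ^ 2) * |y| :=
    calc x * y ≤ |x| * |y| := (le_abs_self _).trans (abs_mul x y).le
      _ ≤ √(s + x ^ 2) * |y| := mul_le_mul_of_nonneg_right hx (abs_nonneg y)
  refine Real.sqrt_le_iff.mpr ⟨by positivity, ?_⟩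
  nlinarith [Real.sq_sqrt hsx, sq_abs y]

theorem eye_transfer_strict (C D θi θj : ℝ) (hC : 0 ≤ C) (hD : 0 ≤ D)
    (hj : θj ≠ 0) :
    Real.sqrt (C ^ 2 + D + (θi + θj) ^ 2) <
      |θj| + Real.sqrt ((C + |θj|) ^ 2 + D + θi ^ 2) := by
  have hC_lt : C ^ 2 < (C + |θj|) ^ 2 :=
    pow_lt_pow_left₀ (lt_add_of_pos_right C (abs_pos.mpr hj)) hC two_ne_zero
  calc √(C ^ 2 + D + (θi + θj) ^ 2) ≤ √(C ^ 2 + D + θi ^ 2) + |θj| :=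
        Real.sqrt_add_sq_add_le (by positivity) θi θj
    _ < √((C + |θj|) ^ 2 + D + θi ^ 2) + |θj| := by gcongr
    _ = |θj| + √((C + |θj|) ^ 2 + D + θi ^ 2) := add_comm _ _
end

section
/- (Perfect correlation, known vs. unknown) Suppose θ̂ minimizes L(θ) = ½‖y − Xθ‖₂² + nλ·eye(θ) with nλ > 0, and columns i, j of X are identical with rᵢ = 1 and rⱼ = 0. Then θ̂ⱼ = 0. -/
open Finset

theorem Fintype.sum_eq_sum_add_of_eq_off_pair {ι M : Type*} [Fintype ι] [AddCommGroup M]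
    {f g : ι → M} {i j : ι} (hij : i ≠ j) (h : ∀ l, l ≠ i → l ≠ j → f l = g l) :
    ∑ l, f l = ∑ l, g l + (f i - g i) + (f j - g j) := by
  have hdiff : ∑ l, (f l - g l) = (f i - g i) + (f j - g j) :=
    Fintype.sum_eq_add i j hij fun l hl => sub_eq_zero.mpr (h l hl.1 hl.2)
  rw [sum_sub_distrib, sub_eq_iff_eq_add'] at hdiff
  rw [hdiff, add_assoc]

theorem add_sqrt_lt_of_merge {L Q c t : ℝ} (ht : t ≠ 0) (htL : |t| ≤ L) (hcQ : c ^ 2 ≤ Q) :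
    (L - |t|) + √((L - |t|) ^ 2 + (Q - c ^ 2 + (c + t) ^ 2)) < L + √(L ^ 2 + Q) := by
  set s := √(L ^ 2 + Q)
  have hb : 0 < |t| := abs_pos.mpr ht
  have hs_sq : s ^ 2 = L ^ 2 + Q := Real.sq_sqrt (by nlinarith [sq_nonneg c])
  have hLs : L ≤ s := Real.le_sqrt_of_sq_le (by nlinarith [sq_nonneg c])
  have hcs : |c| ≤ s := Real.abs_le_sqrt (by nlinarith)
  have hct : c * t ≤ |c| * |t| := by rw [← abs_mul]; exact le_abs_self _
  suffices √((L - |t|) ^ 2 + (Q - c ^ 2 + (c + t) ^ 2)) < |t| + s by linarith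
  rw [Real.sqrt_lt' (by positivity)]
  nlinarith [sq_abs t, mul_le_mul_of_nonneg_left hcs hb.le, mul_le_mul_of_nonneg_left htL hb.le,
    mul_pos hb hb]

section Merge

variable {ι : Type*} [DecidableEq ι]

def mergeCoord (i j : ι) (θ : ι → ℝ) : ι → ℝ :=
  Function.update (Function.update θ i (θ i + θ j)) j 0

variable {i j : ι} {θ : ι → ℝ}

theorem mergeCoord_apply_left (hij : i ≠ j) : mergeCoord i j θ i = θ i + θ j := by
  simp [mergeCoord, hij]

theorem mergeCoord_apply_right : mergeCoord i j θ j = 0 := by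
  simp [mergeCoord]

theorem mergeCoord_apply_of_ne {l : ι} (hi : l ≠ i) (hj : l ≠ j) :
    mergeCoord i j θ l = θ l := by
  simp [mergeCoord, hi, hj]

theorem sum_eq_sum_mergeCoord_add [Fintype ι] (hij : i ≠ j) (f : ι → ℝ → ℝ) :
    ∑ l, f l (mergeCoord i j θ l) =
      ∑ l, f l (θ l) + (f i (θ i + θ j) - f i (θ i)) + (f j 0 - f j (θ j)) := by
  rw [Fintype.sum_eq_sum_add_of_eq_off_pair hij fun l hi hj => by
    rw [mergeCoord_apply_of_ne hi hj], mergeCoord_apply_left hij, mergeCoord_apply_right]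

theorem sum_mul_mergeCoord [Fintype ι] (hij : i ≠ j) {x : ι → ℝ} (hx : x i = x j) :
    ∑ l, x l * mergeCoord i j θ l = ∑ l, x l * θ l := by
  rw [sum_eq_sum_mergeCoord_add hij fun l v => x l * v, hx]
  ring

end Merge

theorem eye_mergeCoord_lt {d : ℕ} {r θ : Fin d → ℝ} (hr : ∀ l, r l ≤ 1) {i j : Fin d}
    (hij : i ≠ j) (hri : r i = 1) (hrj : r j = 0) (hθj : θ j ≠ 0) :
    eye r (mergeCoord i j θ) < eye r θ := by
  have hL : ∑ l, (1 - r l) * |mergeCoord i j θ l| = ∑ l, (1 - r l) * |θ l| - |θ j| := by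
    rw [sum_eq_sum_mergeCoord_add hij fun l v => (1 - r l) * |v|, hri, hrj]
    ring
  have hQ : ∑ l, (r l * mergeCoord i j θ l) ^ 2 =
      ∑ l, (r l * θ l) ^ 2 - θ i ^ 2 + (θ i + θ j) ^ 2 := by
    rw [sum_eq_sum_mergeCoord_add hij fun l v => (r l * v) ^ 2, hri, hrj]
    ring
  have hjL : |θ j| ≤ ∑ l, (1 - r l) * |θ l| := by
    simpa [hrj] using single_le_sum
      (fun l _ => mul_nonneg (sub_nonneg.mpr (hr l)) (abs_nonneg (θ l))) (mem_univ j)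
  have hiQ : θ i ^ 2 ≤ ∑ l, (r l * θ l) ^ 2 := by
    simpa [hri] using single_le_sum (fun l _ => sq_nonneg (r l * θ l)) (mem_univ i)
  rw [eye, eye, hL, hQ]
  exact add_sqrt_lt_of_merge hθj hjL hiQ

theorem eye_perfect_corr_known_vs_unknown {n d : ℕ}
    (X : Fin n → Fin d → ℝ) (y : Fin n → ℝ) (r : Fin d → ℝ)
    (hr : ∀ i, r i = 0 ∨ r i = 1)
    (nl : ℝ) (hnl : 0 < nl)
    (i j : Fin d) (hij : i ≠ j) (hri : r i = 1) (hrj : r j = 0)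
    (hcol : ∀ k, X k i = X k j)
    (θhat : Fin d → ℝ)
    (hmin : ∀ θ : Fin d → ℝ,
      (1 / 2) * (∑ k, (y k - ∑ l, X k l * θhat l) ^ 2) + nl * eye r θhat ≤
      (1 / 2) * (∑ k, (y k - ∑ l, X k l * θ l) ^ 2) + nl * eye r θ) :
    θhat j = 0 := by
  by_contra hj
  have hr_le : ∀ l, r l ≤ 1 := fun l => by rcases hr l with h | h <;> simp [h]
  have hfit := hmin (mergeCoord i j θhat)
  simp only [sum_mul_mergeCoord hij (hcol _)] at hfit
  have hpen := mul_lt_mul_of_pos_left (eye_mergeCoord_lt hr_le hij hri hrj hj) hnl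
  linarith
end

section
/- (Perfect correlation, two known features) Suppose θ̂ minimizes L(θ) = ½‖y − Xθ‖₂² + nλ·eye(θ) with nλ > 0, and columns i, j of X are identical with rᵢ = rⱼ = 1. Then θ̂ᵢ = θ̂ⱼ. -/
section AveragePair

variable {ι : Type*} [Fintype ι] [DecidableEq ι]

lemma sum_apply_update (F : ι → ℝ → ℝ) (θ : ι → ℝ) (i : ι) (a : ℝ) :
    ∑ l, F l (Function.update θ i a l) = ∑ l, F l (θ l) + (F i a - F i (θ i)) := by
  simp only [Function.apply_update F θ, Finset.sum_update_of_mem (Finset.mem_univ i),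
    Finset.sum_eq_add_sum_sdiff_singleton_of_mem (Finset.mem_univ i) (fun l => F l (θ l))]
  ring

noncomputable def averagePair (θ : ι → ℝ) (i j : ι) : ι → ℝ :=
  Function.update (Function.update θ i ((θ i + θ j) / 2)) j ((θ i + θ j) / 2)

lemma sum_apply_averagePair (F : ι → ℝ → ℝ) (θ : ι → ℝ) {i j : ι} (hij : i ≠ j) :
    ∑ l, F l (averagePair θ i j l) = ∑ l, F l (θ l)
      + (F i ((θ i + θ j) / 2) - F i (θ i)) + (F j ((θ i + θ j) / 2) - F j (θ j)) := by
  rw [averagePair, sum_apply_update, sum_apply_update,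
    Function.update_of_ne hij.symm]

lemma sum_mul_averagePair (c θ : ι → ℝ) {i j : ι} (hij : i ≠ j) (hc : c i = c j) :
    ∑ l, c l * averagePair θ i j l = ∑ l, c l * θ l := by
  rw [sum_apply_averagePair (fun l t => c l * t) θ hij, hc]
  ring

lemma sum_mul_abs_averagePair (w θ : ι → ℝ) {i j : ι} (hij : i ≠ j) (hi : w i = 0)
    (hj : w j = 0) : ∑ l, w l * |averagePair θ i j l| = ∑ l, w l * |θ l| := by
  rw [sum_apply_averagePair (fun l t => w l * |t|) θ hij, hi, hj]
  ring

lemma sum_sq_averagePair (r θ : ι → ℝ) {i j : ι} (hij : i ≠ j) (hri : r i = 1)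
    (hrj : r j = 1) :
    ∑ l, (r l * averagePair θ i j l) ^ 2 = ∑ l, (r l * θ l) ^ 2 - (θ i - θ j) ^ 2 / 2 := by
  rw [sum_apply_averagePair (fun l t => (r l * t) ^ 2) θ hij, hri, hrj]
  ring

end AveragePair

lemma eye_lt_eye {d : ℕ} {r θ θ' : Fin d → ℝ}
    (hℓ₁ : ∑ l, (1 - r l) * |θ' l| = ∑ l, (1 - r l) * |θ l|)
    (hℓ₂ : ∑ l, (r l * θ' l) ^ 2 < ∑ l, (r l * θ l) ^ 2) : eye r θ' < eye r θ := by
  unfold eye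
  rw [hℓ₁]
  gcongr

lemma eye_averagePair_lt {d : ℕ} {r θ : Fin d → ℝ} {i j : Fin d} (hij : i ≠ j)
    (hri : r i = 1) (hrj : r j = 1) (hθ : θ i ≠ θ j) : eye r (averagePair θ i j) < eye r θ := by
  apply eye_lt_eye
  · exact sum_mul_abs_averagePair _ θ hij (by rw [hri, sub_self]) (by rw [hrj, sub_self])
  · rw [sum_sq_averagePair r θ hij hri hrj]
    have : 0 < (θ i - θ j) ^ 2 := by positivity [sub_ne_zero.mpr hθ]
    linarith

theorem eye_perfect_corr_two_known_general {n d : ℕ}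
    (X : Fin n → Fin d → ℝ) (y : Fin n → ℝ) (r : Fin d → ℝ)
    (nl : ℝ) (hnl : 0 < nl)
    (i j : Fin d) (hij : i ≠ j) (hri : r i = 1) (hrj : r j = 1)
    (hcol : ∀ k, X k i = X k j)
    (θhat : Fin d → ℝ)
    (hmin : ∀ θ : Fin d → ℝ,
      (1 / 2) * (∑ k, (y k - ∑ l, X k l * θhat l) ^ 2) + nl * eye r θhat ≤
      (1 / 2) * (∑ k, (y k - ∑ l, X k l * θ l) ^ 2) + nl * eye r θ) :
    θhat i = θhat j := by
  by_contra hne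
  have hfit := hmin (averagePair θhat i j)
  simp only [sum_mul_averagePair _ θhat hij (hcol _)] at hfit
  have := mul_lt_mul_of_pos_left (eye_averagePair_lt hij hri hrj hne) hnl
  linarith

theorem eye_perfect_corr_two_known {n d : ℕ}
    (X : Fin n → Fin d → ℝ) (y : Fin n → ℝ) (r : Fin d → ℝ)
    (hr : ∀ i, r i = 0 ∨ r i = 1)
    (nl : ℝ) (hnl : 0 < nl)
    (i j : Fin d) (hij : i ≠ j) (hri : r i = 1) (hrj : r j = 1)
    (hcol : ∀ k, X k i = X k j)
    (θhat : Fin d → ℝ)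
    (hmin : ∀ θ : Fin d → ℝ,
      (1 / 2) * (∑ k, (y k - ∑ l, X k l * θhat l) ^ 2) + nl * eye r θhat ≤
      (1 / 2) * (∑ k, (y k - ∑ l, X k l * θ l) ^ 2) + nl * eye r θ) :
    θhat i = θhat j :=
  eye_perfect_corr_two_known_general X y r nl hnl i j hij hri hrj hcol θhat hmin
end

section
/- (Grouping corollary) Under the hypotheses of the grouping effect bound, if additionally rᵢ = rⱼ ≠ 0, then |θ̂ᵢ − θ̂ⱼ|/Z ≤ √(2(1−ρ))·‖y‖₂/(rᵢ²·nλ). -/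
/-!
Move mass between the two coordinates along the line `t ↦ θ̂ + t (e_j - e_i)`. Since `θ̂ i` and
`θ̂ j` have the same sign and `r i = r j`, the weighted `ℓ¹` part of the EYE penalty is constant
near `t = 0`, so the only first-order change of the penalty comes from the quadratic part, with
derivative `r i ^ 2 (θ̂ j - θ̂ i) / Z`. Stationarity of the objective at its minimiser then gives
`⟨y - X θ̂, x_i - x_j⟩ = nl r i ^ 2 (θ̂ i - θ̂ j) / Z`, and Cauchy–Schwarz together with
`‖y - X θ̂‖ ≤ ‖y‖` (compare the objective with its value at `θ = 0`) yields the bound.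
-/

open Finset

theorem hasDerivAt_add_mul (a b : ℝ) : HasDerivAt (fun t => a + t * b) b 0 := by
  simpa using ((hasDerivAt_id (0 : ℝ)).mul_const b).const_add a

theorem hasDerivAt_sum_sq_add_mul {ι : Type*} [Fintype ι] (a b : ι → ℝ) :
    HasDerivAt (fun t => ∑ k, (a k + t * b k) ^ 2) (∑ k, 2 * a k * b k) 0 := by
  refine HasDerivAt.fun_sum fun k _ => ?_
  exact ((hasDerivAt_pow 2 (a k)).comp_of_eq 0 (hasDerivAt_add_mul _ _) (by simp)).congr_deriv
    (by norm_num)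

theorem hasDerivAt_abs_add_mul {a b : ℝ} (h : a ≠ 0 ∨ b = 0) :
    HasDerivAt (fun t => |a + t * b|) (SignType.sign a * b) 0 := by
  rcases h with ha | rfl
  · exact (hasDerivAt_abs ha).comp_of_eq 0 (hasDerivAt_add_mul a b) (by simp)
  · simpa using hasDerivAt_const (0 : ℝ) |a|

section Line

variable {d : ℕ} (r θ v : Fin d → ℝ)

noncomputable def weightedL1Norm : ℝ := ∑ l, (1 - r l) * |θ l|

noncomputable def weightedSqNorm : ℝ := ∑ l, (r l * θ l) ^ 2

theorem eye_eq : eye r θ =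
    weightedL1Norm r θ + Real.sqrt (weightedL1Norm r θ ^ 2 + weightedSqNorm r θ) := rfl

theorem hasDerivAt_weightedL1Norm_line (hv : ∀ l, θ l ≠ 0 ∨ v l = 0) :
    HasDerivAt (fun t : ℝ => weightedL1Norm r (θ + t • v))
      (∑ l, (1 - r l) * (SignType.sign (θ l) * v l)) 0 := by
  simp only [weightedL1Norm, Pi.add_apply, Pi.smul_apply, smul_eq_mul]
  exact HasDerivAt.fun_sum fun l _ => (hasDerivAt_abs_add_mul (hv l)).const_mul _

theorem hasDerivAt_weightedSqNorm_line :
    HasDerivAt (fun t : ℝ => weightedSqNorm r (θ + t • v))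
      (∑ l, 2 * (r l * θ l) * (r l * v l)) 0 := by
  have h (t : ℝ) (l : Fin d) : r l * (θ + t • v) l = r l * θ l + t * (r l * v l) := by
    simp only [Pi.add_apply, Pi.smul_apply, smul_eq_mul]; ring
  simp only [weightedSqNorm, h]
  exact hasDerivAt_sum_sq_add_mul _ _

theorem hasDerivAt_eye_comp {γ : ℝ → Fin d → ℝ} {L' Q' x : ℝ}
    (hL : HasDerivAt (fun t => weightedL1Norm r (γ t)) L' x)
    (hQ : HasDerivAt (fun t => weightedSqNorm r (γ t)) Q' x)
    (hγ : weightedL1Norm r (γ x) ^ 2 + weightedSqNorm r (γ x) ≠ 0) :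
    HasDerivAt (fun t => eye r (γ t))
      (L' + (2 * weightedL1Norm r (γ x) * L' + Q') /
        (2 * Real.sqrt (weightedL1Norm r (γ x) ^ 2 + weightedSqNorm r (γ x)))) x := by
  have hL2 : HasDerivAt (fun t => weightedL1Norm r (γ t) ^ 2)
      (2 * weightedL1Norm r (γ x) * L') x :=
    ((hasDerivAt_pow 2 _).comp x hL).congr_deriv (by norm_num)
  exact hL.add ((hL2.add hQ).sqrt hγ)

theorem weightedSqNorm_nonneg : 0 ≤ weightedSqNorm r θ :=
  sum_nonneg fun _ _ => sq_nonneg _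

theorem eye_nonneg : 0 ≤ eye r θ := by
  have hQ := weightedSqNorm_nonneg r θ
  have h : |weightedL1Norm r θ| ≤ Real.sqrt (weightedL1Norm r θ ^ 2 + weightedSqNorm r θ) :=
    Real.abs_le_sqrt (by linarith)
  rw [eye_eq]
  linarith [neg_abs_le (weightedL1Norm r θ)]

@[simp]
theorem eye_zero : eye r 0 = 0 := by
  simp [eye]

end Line

section Objective

variable {n d : ℕ} (X : Fin n → Fin d → ℝ) (y : Fin n → ℝ)

def regressionResidual (θ : Fin d → ℝ) (k : Fin n) : ℝ := y k - ∑ l, X k l * θ l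

noncomputable def eyeObjective (r : Fin d → ℝ) (nl : ℝ) (θ : Fin d → ℝ) : ℝ :=
  1 / 2 * ∑ k, regressionResidual X y θ k ^ 2 + nl * eye r θ

theorem hasDerivAt_sum_sq_regressionResidual_line (θ v : Fin d → ℝ) :
    HasDerivAt (fun t : ℝ => 1 / 2 * ∑ k, regressionResidual X y (θ + t • v) k ^ 2)
      (-∑ k, regressionResidual X y θ k * ∑ l, X k l * v l) 0 := by
  have h (t : ℝ) (k : Fin n) :
      regressionResidual X y (θ + t • v) k =
        regressionResidual X y θ k + t * -∑ l, X k l * v l := by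
    simp only [regressionResidual, Pi.add_apply, Pi.smul_apply, smul_eq_mul, mul_add,
      sum_add_distrib, mul_neg, mul_sum, mul_left_comm _ t]
    abel
  simp only [h]
  refine ((hasDerivAt_sum_sq_add_mul _ _).const_mul (1 / 2)).congr_deriv ?_
  rw [mul_sum, ← sum_neg_distrib]
  exact sum_congr rfl fun k _ => by ring

end Objective

section Stationarity

variable {n d : ℕ} {X : Fin n → Fin d → ℝ} {y : Fin n → ℝ} {r : Fin d → ℝ} {nl : ℝ}
  {θ : Fin d → ℝ}

theorem sum_sq_regressionResidual_le (hnl : 0 ≤ nl)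
    (hmin : ∀ θ', eyeObjective X y r nl θ ≤ eyeObjective X y r nl θ') :
    ∑ k, regressionResidual X y θ k ^ 2 ≤ ∑ k, y k ^ 2 := by
  have hy : regressionResidual X y 0 = y := by
    funext k
    simp [regressionResidual]
  have h := hmin 0
  simp only [eyeObjective, hy, eye_zero, mul_zero, add_zero] at h
  nlinarith [mul_nonneg hnl (eye_nonneg r θ)]

theorem eyeObjective_line_deriv_eq_zero {v : Fin d → ℝ}
    (hmin : ∀ θ', eyeObjective X y r nl θ ≤ eyeObjective X y r nl θ')
    (hv : ∀ l, θ l ≠ 0 ∨ v l = 0)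
    (hθ : weightedL1Norm r θ ^ 2 + weightedSqNorm r θ ≠ 0) :
    -∑ k, regressionResidual X y θ k * ∑ l, X k l * v l +
      nl * (∑ l, (1 - r l) * (SignType.sign (θ l) * v l) +
        (2 * weightedL1Norm r θ * ∑ l, (1 - r l) * (SignType.sign (θ l) * v l) +
          ∑ l, 2 * (r l * θ l) * (r l * v l)) /
        (2 * Real.sqrt (weightedL1Norm r θ ^ 2 + weightedSqNorm r θ))) = 0 := by
  have h0 : θ + (0 : ℝ) • v = θ := by simp
  have hline := (hasDerivAt_sum_sq_regressionResidual_line X y θ v).add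
    ((hasDerivAt_eye_comp r (hasDerivAt_weightedL1Norm_line r θ v hv)
      (hasDerivAt_weightedSqNorm_line r θ v) (by rwa [h0])).const_mul nl)
  rw [h0] at hline
  have hlocal : IsLocalMin (fun t : ℝ => eyeObjective X y r nl (θ + t • v)) 0 :=
    Filter.Eventually.of_forall fun t => by simpa only [h0] using hmin (θ + t • v)
  exact hlocal.hasDerivAt_eq_zero hline

theorem sum_regressionResidual_mul_sub_eq {i j : Fin d}
    (hmin : ∀ θ', eyeObjective X y r nl θ ≤ eyeObjective X y r nl θ')
    (hsign : 0 < θ i * θ j) (hrij : r i = r j)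
    (hθ : weightedL1Norm r θ ^ 2 + weightedSqNorm r θ ≠ 0) :
    ∑ k, regressionResidual X y θ k * (X k i - X k j) =
      nl * r i ^ 2 * (θ i - θ j) / Real.sqrt (weightedL1Norm r θ ^ 2 + weightedSqNorm r θ) := by
  set v : Fin d → ℝ := Pi.single j 1 - Pi.single i 1
  have hsum (c : Fin d → ℝ) : ∑ l, c l * v l = c j - c i := by
    simp [v, mul_sub, sum_sub_distrib, Pi.single_apply]
  have hv (l : Fin d) : θ l ≠ 0 ∨ v l = 0 := by
    by_cases hl : l = i ∨ l = j
    · rcases hl with rfl | rfl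
      · exact .inl (left_ne_zero_of_mul hsign.ne')
      · exact .inl (right_ne_zero_of_mul hsign.ne')
    · rw [not_or] at hl
      exact .inr (by simp [v, hl.1, hl.2])
  have hsgn : SignType.sign (θ i) = SignType.sign (θ j) := by
    rcases pos_and_pos_or_neg_and_neg_of_mul_pos hsign with ⟨hi, hj⟩ | ⟨hi, hj⟩ <;>
      simp [sign_pos, sign_neg, hi, hj]
  have h := eyeObjective_line_deriv_eq_zero hmin hv hθ
  simp only [← mul_assoc, hsum, hsgn, hrij, sub_self, mul_zero, zero_add] at h
  have hflip : ∑ k, regressionResidual X y θ k * (X k i - X k j) =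
      -∑ k, regressionResidual X y θ k * (X k j - X k i) := by
    rw [← sum_neg_distrib]
    exact sum_congr rfl fun k _ => by ring
  have hZ : 0 < Real.sqrt (weightedL1Norm r θ ^ 2 + weightedSqNorm r θ) :=
    Real.sqrt_pos.2 ((add_nonneg (sq_nonneg _) (weightedSqNorm_nonneg r θ)).lt_of_ne' hθ)
  rw [hflip, hrij, eq_div_iff hZ.ne']
  field_simp at h
  linarith

end Stationarity

theorem abs_sum_mul_le_sqrt_mul_sqrt {ι : Type*} (s : Finset ι) (f g : ι → ℝ) :
    |∑ i ∈ s, f i * g i| ≤ Real.sqrt (∑ i ∈ s, f i ^ 2) * Real.sqrt (∑ i ∈ s, g i ^ 2) := by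
  refine abs_le.2 ⟨?_, Real.sum_mul_le_sqrt_mul_sqrt s f g⟩
  have h := Real.sum_mul_le_sqrt_mul_sqrt s f (-g)
  simp only [Pi.neg_apply, mul_neg, sum_neg_distrib, neg_sq] at h
  linarith

theorem eye_grouping_corollary_general {n d : ℕ}
    (X : Fin n → Fin d → ℝ) (y : Fin n → ℝ) (r : Fin d → ℝ)
    (nl : ℝ) (hnl : 0 < nl)
    (i j : Fin d)
    (θhat : Fin d → ℝ)
    (hmin : ∀ θ : Fin d → ℝ,
      (1 / 2) * (∑ k, (y k - ∑ l, X k l * θhat l) ^ 2) + nl * eye r θhat ≤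
      (1 / 2) * (∑ k, (y k - ∑ l, X k l * θ l) ^ 2) + nl * eye r θ)
    (hsign : 0 < θhat i * θhat j)
    (ρ : ℝ) (hstd : ∑ k, (X k i - X k j) ^ 2 = 2 * (1 - ρ))
    (Z : ℝ)
    (hZ : Z = Real.sqrt ((∑ l, (1 - r l) * |θhat l|) ^ 2 + ∑ l, (r l * θhat l) ^ 2))
    (hZpos : 0 < Z)
    (hrij : r i = r j) (hrne : r i ≠ 0) :
    |θhat i - θhat j| / Z ≤
      Real.sqrt (2 * (1 - ρ)) * Real.sqrt (∑ k, (y k) ^ 2) / (r i ^ 2 * nl) := by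
  change ∀ θ, eyeObjective X y r nl θhat ≤ eyeObjective X y r nl θ at hmin
  change Z = Real.sqrt (weightedL1Norm r θhat ^ 2 + weightedSqNorm r θhat) at hZ
  have hkey := sum_regressionResidual_mul_sub_eq hmin hsign hrij
    (Real.sqrt_pos.1 (hZ ▸ hZpos)).ne'
  rw [← hZ] at hkey
  have hcs := abs_sum_mul_le_sqrt_mul_sqrt univ (regressionResidual X y θhat)
    (fun k => X k i - X k j)
  rw [hkey, hstd] at hcs
  rw [le_div_iff₀ (by positivity)]
  calc |θhat i - θhat j| / Z * (r i ^ 2 * nl)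
      = |nl * r i ^ 2 * (θhat i - θhat j) / Z| := by
        rw [abs_div, abs_mul, abs_mul, abs_of_pos hnl, abs_of_pos hZpos, abs_sq]
        ring
    _ ≤ Real.sqrt (∑ k, regressionResidual X y θhat k ^ 2) * Real.sqrt (2 * (1 - ρ)) := hcs
    _ ≤ Real.sqrt (∑ k, y k ^ 2) * Real.sqrt (2 * (1 - ρ)) :=
        mul_le_mul_of_nonneg_right
          (Real.sqrt_le_sqrt (sum_sq_regressionResidual_le hnl.le hmin))
          (Real.sqrt_nonneg _)
    _ = Real.sqrt (2 * (1 - ρ)) * Real.sqrt (∑ k, y k ^ 2) := mul_comm _ _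

theorem eye_grouping_corollary {n d : ℕ}
    (X : Fin n → Fin d → ℝ) (y : Fin n → ℝ) (r : Fin d → ℝ)
    (nl : ℝ) (hnl : 0 < nl)
    (i j : Fin d) (hij : i ≠ j)
    (θhat : Fin d → ℝ)
    (hmin : ∀ θ : Fin d → ℝ,
      (1 / 2) * (∑ k, (y k - ∑ l, X k l * θhat l) ^ 2) + nl * eye r θhat ≤
      (1 / 2) * (∑ k, (y k - ∑ l, X k l * θ l) ^ 2) + nl * eye r θ)
    (hsign : 0 < θhat i * θhat j)
    (ρ : ℝ) (hstd : ∑ k, (X k i - X k j) ^ 2 = 2 * (1 - ρ))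
    (Z : ℝ)
    (hZ : Z = Real.sqrt ((∑ l, (1 - r l) * |θhat l|) ^ 2 + ∑ l, (r l * θhat l) ^ 2))
    (hZpos : 0 < Z)
    (hrij : r i = r j) (hrne : r i ≠ 0) :
    |θhat i - θhat j| / Z ≤
      Real.sqrt (2 * (1 - ρ)) * Real.sqrt (∑ k, (y k) ^ 2) / (r i ^ 2 * nl) :=
  eye_grouping_corollary_general X y r nl hnl i j θhat hmin hsign ρ hstd Z hZ hZpos hrij hrne
end

section
/- (Orthonormal-design soft-thresholding form) Suppose XᵀX = I, θ̂ minimizes ½‖y − Xθ‖₂² + nλ·eye(θ) with nλ > 0, θ̂ ≠ 0, and let Z = √(‖(1−r)⊙θ̂‖₁² + ‖r⊙θ̂‖₂²) and θ̂^OLS = Xᵀy. Then for each coordinate i with rᵢ ∈ {0,1}: θ̂ᵢ = (θ̂ᵢ^OLS / (1 + (nλ/Z)rᵢ²)) · max(0, 1 − nλ(1−rᵢ)(1 + ‖(1−r)⊙θ̂‖₁/Z)/|θ̂ᵢ^OLS|) whenever θ̂ᵢ^OLS ≠ 0, and θ̂ᵢ = 0 when θ̂ᵢ^OLS = 0. In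 particular, if rᵢ = 0 and |θ̂ᵢ^OLS| ≤ nλ(1 + ‖(1−r)⊙θ̂‖₁/Z), then θ̂ᵢ = 0. -/
/-!
Since `XᵀX = I`, the loss separates as `½‖y‖² + ∑ₗ (θₗ²/2 - θᴼᴸˢₗ θₗ)`. Freezing every coordinate
but the `i`-th, `θ̂ᵢ` therefore minimises `t ↦ t²/2 - θᴼᴸˢᵢ t + nλ k(|t|)`, where `k` is the
smooth function `eyeProfile` of `u = |t|`. Comparing one-sided derivatives at `θ̂ᵢ` yields the
subgradient condition `θᴼᴸˢᵢ - c θ̂ᵢ ∈ T ∂|θ̂ᵢ|` with `c = 1 + nλ rᵢ²/Z` and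
`T = nλ (1 - rᵢ)(1 + ‖(1-r)⊙θ̂‖₁/Z)`, whose unique solution is the soft-thresholding formula.
-/

open Set Function Matrix

theorem Fintype.sum_apply_update {ι α M : Type*} [Fintype ι] [DecidableEq ι] [AddCommMonoid M]
    (f : ι → α → M) (θ : ι → α) (i : ι) (t : α) :
    ∑ l, f l (update θ i t l) = f i t + ∑ l ∈ {i}ᶜ, f l (θ l) := by
  rw [Fintype.sum_eq_add_sum_compl i, update_self]
  congr 1
  exact Finset.sum_congr rfl fun l hl => by rw [update_of_ne (by simpa using hl)]

theorem Matrix.dotProduct_sub_mulVec_self {m n : Type*} [Fintype m] [Fintype n] [DecidableEq n]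
    (X : Matrix m n ℝ) (hX : Xᵀ * X = 1) (y : m → ℝ) (θ : n → ℝ) :
    (y - X *ᵥ θ) ⬝ᵥ (y - X *ᵥ θ) = y ⬝ᵥ y - 2 * ((Xᵀ *ᵥ y) ⬝ᵥ θ) + θ ⬝ᵥ θ := by
  have hcross : y ⬝ᵥ (X *ᵥ θ) = (Xᵀ *ᵥ y) ⬝ᵥ θ := by
    rw [dotProduct_mulVec, mulVec_transpose]
  have hquad : (X *ᵥ θ) ⬝ᵥ (X *ᵥ θ) = θ ⬝ᵥ θ := by
    rw [dotProduct_mulVec, ← mulVec_transpose, mulVec_mulVec, hX, one_mulVec]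
  simp only [sub_dotProduct, dotProduct_sub, hcross, hquad, dotProduct_comm (X *ᵥ θ) y]
  ring

theorem HasDerivAt.nonneg_of_isMinOn_Ici {f : ℝ → ℝ} {f' s x : ℝ} (hf : HasDerivAt f f' x)
    (hmin : IsMinOn f (Ici s) x) (hx : s ≤ x) : 0 ≤ f' := by
  have hcone : (1 : ℝ) ∈ posTangentConeAt (Ici s) x :=
    mem_posTangentConeAt_of_segment_subset <| by
      rw [segment_eq_Icc (by linarith)]
      exact Icc_subset_Ici_iff (by linarith) |>.2 hx
  simpa using hmin.localize.hasFDerivWithinAt_nonneg hf.hasFDerivAt.hasFDerivWithinAt hcone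

theorem HasDerivAt.nonpos_of_isMinOn_Iic {f : ℝ → ℝ} {f' s x : ℝ} (hf : HasDerivAt f f' x)
    (hmin : IsMinOn f (Iic s) x) (hx : x ≤ s) : f' ≤ 0 := by
  have hcone : (-1 : ℝ) ∈ posTangentConeAt (Iic s) x :=
    mem_posTangentConeAt_of_segment_subset <| by
      rw [segment_symm, segment_eq_Icc (by linarith)]
      exact Icc_subset_Iic_iff (by linarith) |>.2 hx
  simpa using hmin.localize.hasFDerivWithinAt_nonneg hf.hasFDerivAt.hasFDerivWithinAt hcone

theorem subgradient_of_isMin_quadratic_add_comp_abs {g : ℝ → ℝ} {a t₀ D : ℝ}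
    (hg : HasDerivAt g D |t₀|)
    (hmin : ∀ t, t₀ ^ 2 / 2 - a * t₀ + g |t₀| ≤ t ^ 2 / 2 - a * t + g |t|) :
    (0 < t₀ → a = t₀ + D) ∧ (t₀ < 0 → a = t₀ - D) ∧ (t₀ = 0 → |a| ≤ D) := by
  have hquad : HasDerivAt (fun t : ℝ => t ^ 2 / 2 - a * t) (t₀ - a) t₀ := by
    have := ((hasDerivAt_pow 2 t₀).div_const 2).sub ((hasDerivAt_id t₀).const_mul a)
    exact this.congr_deriv (by simp)
  have hright (h : 0 ≤ t₀) : HasDerivAt (fun t => t ^ 2 / 2 - a * t + g t) (t₀ - a + D) t₀ ∧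
      IsMinOn (fun t => t ^ 2 / 2 - a * t + g t) (Ici 0) t₀ := by
    rw [abs_of_nonneg h] at hg hmin
    refine ⟨hquad.add hg, fun t (ht : 0 ≤ t) => ?_⟩
    simpa [abs_of_nonneg ht] using hmin t
  have hleft (h : t₀ ≤ 0) : HasDerivAt (fun t => t ^ 2 / 2 - a * t + g (-t)) (t₀ - a - D) t₀ ∧
      IsMinOn (fun t => t ^ 2 / 2 - a * t + g (-t)) (Iic 0) t₀ := by
    rw [abs_of_nonpos h] at hg hmin
    refine ⟨(hquad.add (hg.comp t₀ (hasDerivAt_neg t₀))).congr_deriv (by ring),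
      fun t (ht : t ≤ 0) => ?_⟩
    simpa [abs_of_nonpos ht] using hmin t
  refine ⟨fun h => ?_, fun h => ?_, fun h => ?_⟩
  · obtain ⟨hd, hm⟩ := hright h.le
    linarith [(hm.isLocalMin (Ici_mem_nhds h)).hasDerivAt_eq_zero hd]
  · obtain ⟨hd, hm⟩ := hleft h.le
    linarith [(hm.isLocalMin (Iic_mem_nhds h)).hasDerivAt_eq_zero hd]
  · obtain ⟨hdR, hmR⟩ := hright h.ge
    obtain ⟨hdL, hmL⟩ := hleft h.le
    have hR := hdR.nonneg_of_isMinOn_Ici hmR h.ge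
    have hL := hdL.nonpos_of_isMinOn_Iic hmL h.le
    rw [abs_le]
    constructor <;> linarith

theorem eq_soft_threshold_of_subgradient {a c t T : ℝ} (hc : 0 < c) (hT : 0 ≤ T)
    (hpos : 0 < t → a = c * t + T) (hneg : t < 0 → a = c * t - T) (hzero : t = 0 → |a| ≤ T) :
    (a ≠ 0 → t = a / c * max 0 (1 - T / |a|)) ∧ (|a| ≤ T → t = 0) := by
  rcases lt_trichotomy t 0 with ht | rfl | ht
  · have ha := hneg ht
    have hct : c * t < 0 := mul_neg_of_pos_of_neg hc ht
    have habs : |a| = T - c * t := by rw [abs_of_neg (by linarith), ha]; ring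
    refine ⟨fun _ => ?_, fun _ => by linarith⟩
    rw [habs, max_eq_right (sub_nonneg.2 ((div_le_one (by linarith)).2 (by linarith))), ha,
      one_sub_div (by linarith), div_mul_div_comm, eq_div_iff (by nlinarith)]
    ring
  · refine ⟨fun hane => ?_, fun _ => rfl⟩
    rw [max_eq_left, mul_zero]
    rw [sub_nonpos, le_div_iff₀ (abs_pos.2 hane)]
    linarith [hzero rfl]
  · have ha := hpos ht
    have hct : 0 < c * t := mul_pos hc ht
    have habs : |a| = c * t + T := by rw [abs_of_pos (by linarith), ha]
    refine ⟨fun _ => ?_, fun _ => by linarith⟩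
    rw [habs, max_eq_right (sub_nonneg.2 ((div_le_one (by linarith)).2 (by linarith))), ha,
      one_sub_div (by linarith), div_mul_div_comm, eq_div_iff (by positivity)]
    ring

noncomputable def eyeProfile (ρ S Q u : ℝ) : ℝ :=
  ((1 - ρ) * u + S) + √(((1 - ρ) * u + S) ^ 2 + (ρ * u) ^ 2 + Q)

theorem hasDerivAt_eyeProfile {ρ S Q u R : ℝ}
    (hR : √(((1 - ρ) * u + S) ^ 2 + (ρ * u) ^ 2 + Q) = R) (hR0 : R ≠ 0) :
    HasDerivAt (eyeProfile ρ S Q) ((1 - ρ) * (1 + ((1 - ρ) * u + S) / R) + ρ ^ 2 * u / R) u := by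
  have hlin : HasDerivAt (fun u => (1 - ρ) * u + S) (1 - ρ) u := by
    simpa using ((hasDerivAt_id u).const_mul (1 - ρ)).add_const S
  have hrad : HasDerivAt (fun u => ((1 - ρ) * u + S) ^ 2 + (ρ * u) ^ 2 + Q)
      (2 * ((1 - ρ) * u + S) * (1 - ρ) + 2 * (ρ * u) * ρ) u := by
    have hρ : HasDerivAt (fun u => ρ * u) ρ u := by simpa using (hasDerivAt_id u).const_mul ρ
    simpa using ((hlin.pow 2).add (hρ.pow 2)).add_const Q
  have hpos : ((1 - ρ) * u + S) ^ 2 + (ρ * u) ^ 2 + Q ≠ 0 := by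
    rintro h; rw [h, Real.sqrt_zero] at hR; exact hR0 hR.symm
  refine (hlin.add (hrad.sqrt hpos)).congr_deriv ?_
  rw [hR]; field_simp; ring

theorem eye_update {d : ℕ} (r θ : Fin d → ℝ) (i : Fin d) (t : ℝ) :
    eye r (update θ i t) = eyeProfile (r i) (∑ l ∈ {i}ᶜ, (1 - r l) * |θ l|)
      (∑ l ∈ {i}ᶜ, (r l * θ l) ^ 2) |t| := by
  rw [eye, eyeProfile, Fintype.sum_apply_update (fun l s => (1 - r l) * |s|),
    Fintype.sum_apply_update (fun l s => (r l * s) ^ 2), mul_pow, mul_pow, sq_abs]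
  ring_nf

theorem sum_one_sub_mul_abs_nonneg {ι : Type*} [Fintype ι] {r θ : ι → ℝ} (hr : ∀ l, r l ≤ 1) :
    0 ≤ ∑ l, (1 - r l) * |θ l| :=
  Finset.sum_nonneg fun l _ => mul_nonneg (sub_nonneg.2 (hr l)) (abs_nonneg _)

theorem eye_radicand_pos {ι : Type*} [Fintype ι] {r θ : ι → ℝ} (hr : ∀ l, r l ≤ 1) (hθ : θ ≠ 0) :
    0 < (∑ l, (1 - r l) * |θ l|) ^ 2 + ∑ l, (r l * θ l) ^ 2 := by
  obtain ⟨j, hj⟩ := Function.ne_iff.1 hθ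
  have hQ : 0 ≤ ∑ l, (r l * θ l) ^ 2 := Finset.sum_nonneg fun l _ => sq_nonneg _
  by_cases hrj : r j = 0
  · have hS : 0 < ∑ l, (1 - r l) * |θ l| :=
      lt_of_lt_of_le (by simpa [hrj] using hj)
        (Finset.single_le_sum (fun l _ => mul_nonneg (sub_nonneg.2 (hr l)) (abs_nonneg (θ l)))
          (Finset.mem_univ j))
    positivity
  · have hQ : 0 < ∑ l, (r l * θ l) ^ 2 :=
      lt_of_lt_of_le (sq_pos_of_ne_zero (mul_ne_zero hrj hj))
        (Finset.single_le_sum (fun l _ => sq_nonneg (r l * θ l)) (Finset.mem_univ j))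
    positivity

theorem coordinate_min_of_eye_min {n d : ℕ} (X : Fin n → Fin d → ℝ) (y : Fin n → ℝ)
    (r : Fin d → ℝ) (nl : ℝ) (horth : ∀ i j : Fin d, (∑ k, X k i * X k j) = if i = j then 1 else 0)
    (θhat : Fin d → ℝ)
    (hmin : ∀ θ : Fin d → ℝ,
      (1 / 2) * (∑ k, (y k - ∑ l, X k l * θhat l) ^ 2) + nl * eye r θhat ≤
      (1 / 2) * (∑ k, (y k - ∑ l, X k l * θ l) ^ 2) + nl * eye r θ)
    (i : Fin d) (t : ℝ) :
    (θhat i) ^ 2 / 2 - (∑ k, X k i * y k) * θhat i + nl * eyeProfile (r i)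
        (∑ l ∈ {i}ᶜ, (1 - r l) * |θhat l|) (∑ l ∈ {i}ᶜ, (r l * θhat l) ^ 2) |θhat i| ≤
      t ^ 2 / 2 - (∑ k, X k i * y k) * t + nl * eyeProfile (r i)
        (∑ l ∈ {i}ᶜ, (1 - r l) * |θhat l|) (∑ l ∈ {i}ᶜ, (r l * θhat l) ^ 2) |t| := by
  have hX : (Matrix.of X)ᵀ * Matrix.of X = 1 :=
    Matrix.ext fun i j => by simpa [Matrix.mul_apply, Matrix.one_apply] using horth i j
  have hloss : ∀ θ : Fin d → ℝ, ∑ k, (y k - ∑ l, X k l * θ l) ^ 2 =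
      ∑ k, y k ^ 2 - 2 * ∑ l, (∑ k, X k l * y k) * θ l + ∑ l, θ l ^ 2 := by
    intro θ
    simpa [dotProduct, mulVec, sq] using Matrix.dotProduct_sub_mulVec_self _ hX y θ
  have hhat := eye_update r θhat i (θhat i)
  rw [update_eq_self] at hhat
  have h := hmin (update θhat i t)
  rw [hloss, hloss, eye_update, hhat,
    Fintype.sum_apply_update (fun l s => (∑ k, X k l * y k) * s),
    Fintype.sum_apply_update (fun l s => s ^ 2),
    Fintype.sum_eq_add_sum_compl i (fun l => (∑ k, X k l * y k) * θhat l),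
    Fintype.sum_eq_add_sum_compl i (fun l => θhat l ^ 2)] at h
  linarith

theorem eye_orthonormal_soft_threshold {n d : ℕ}
    (X : Fin n → Fin d → ℝ) (y : Fin n → ℝ) (r : Fin d → ℝ)
    (hr : ∀ i, r i = 0 ∨ r i = 1)
    (nl : ℝ) (hnl : 0 < nl)
    (horth : ∀ i j : Fin d, (∑ k, X k i * X k j) = if i = j then 1 else 0)
    (θhat : Fin d → ℝ) (hθ : θhat ≠ 0)
    (hmin : ∀ θ : Fin d → ℝ,
      (1 / 2) * (∑ k, (y k - ∑ l, X k l * θhat l) ^ 2) + nl * eye r θhat ≤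
      (1 / 2) * (∑ k, (y k - ∑ l, X k l * θ l) ^ 2) + nl * eye r θ)
    (Z : ℝ)
    (hZ : Z = Real.sqrt ((∑ l, (1 - r l) * |θhat l|) ^ 2 + ∑ l, (r l * θhat l) ^ 2))
    (θOLS : Fin d → ℝ) (hOLS : ∀ i, θOLS i = ∑ k, X k i * y k) :
    ∀ i : Fin d,
      (θOLS i ≠ 0 →
        θhat i = θOLS i / (1 + nl / Z * (r i) ^ 2) *
          max 0 (1 - nl * (1 - r i) * (1 + (∑ l, (1 - r l) * |θhat l|) / Z) / |θOLS i|)) ∧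
      (θOLS i = 0 → θhat i = 0) ∧
      (r i = 0 → |θOLS i| ≤ nl * (1 + (∑ l, (1 - r l) * |θhat l|) / Z) → θhat i = 0) := by
  intro i
  have hr1 : ∀ l, r l ≤ 1 := fun l => by rcases hr l with h | h <;> linarith
  have hsplit : ∑ l, (1 - r l) * |θhat l| =
      (1 - r i) * |θhat i| + ∑ l ∈ {i}ᶜ, (1 - r l) * |θhat l| :=
    Fintype.sum_eq_add_sum_compl i _
  have hZpos : 0 < Z := hZ ▸ Real.sqrt_pos.2 (eye_radicand_pos hr1 hθ)
  have hZ' : √(((1 - r i) * |θhat i| + ∑ l ∈ {i}ᶜ, (1 - r l) * |θhat l|) ^ 2 + (r i * |θhat i|) ^ 2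
      + ∑ l ∈ {i}ᶜ, (r l * θhat l) ^ 2) = Z := by
    rw [hZ, hsplit, Fintype.sum_eq_add_sum_compl i (fun l => (r l * θhat l) ^ 2), mul_pow, mul_pow,
      sq_abs, add_assoc]
  obtain ⟨hpos, hneg, hzero⟩ := subgradient_of_isMin_quadratic_add_comp_abs
    ((hasDerivAt_eyeProfile hZ' hZpos.ne').const_mul nl)
    (hOLS i ▸ coordinate_min_of_eye_min X y r nl horth θhat hmin i)
  rw [← hsplit] at hpos hneg hzero
  have hT : 0 ≤ nl * (1 - r i) * (1 + (∑ l, (1 - r l) * |θhat l|) / Z) := by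
    have hsum := sum_one_sub_mul_abs_nonneg (θ := θhat) hr1
    have hri := sub_nonneg.2 (hr1 i)
    positivity
  obtain ⟨hsoft, hdead⟩ :=
    eq_soft_threshold_of_subgradient (c := 1 + nl / Z * r i ^ 2) (by positivity) hT
    (fun h => by rw [hpos h, abs_of_pos h]; ring) (fun h => by rw [hneg h, abs_of_neg h]; ring)
    (fun h => (hzero h).trans_eq (by rw [h, abs_zero]; ring))
  exact ⟨hsoft, fun h => hdead (by rw [h, abs_zero]; exact hT),
    fun h => by simpa [h] using hdead⟩
end
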